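/- arXiv:1110.6675 — 3 statements merged into one kernel-verified Lean document; each statement's English description precedes it below -/
import Mathlib

section
/- Let m ≥ 1 and let Q ∈ ℂ[x_1, …, x_m] be any polynomial satisfying Q(t_1², …, t_m²) = ∏_{ε ∈ {−1,1}^m} (1 + ε_1 t_1 + ⋯ + ε_m t_m) in ℂ[t_1, …, t_m]. Then Q is irreducible in ℂ[x_1, …, x_m]. In other words, the expanded polynomial ∏_{ε_i ∈ {−1,1}} (1 + ε_1√(x_1) + ⋯ + ε_m√(x_m)) is irreducible in ℂ[x_1, …, x_m]. -/
open MvPolynomial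

/-- The sign `±1 ∈ ℂ` attached to a boolean. -/
noncomputable def signVal (b : Bool) : ℂ := if b then 1 else -1

/-!
Write `φ = expand 2` for the substitution `x_i ↦ t_i²`, so that `φ Q = ∏_ε L_ε` with
`L_ε = 1 + ∑ ε_i t_i`. The `L_ε` are pairwise non-associated primes, and the sign changes
`t_i ↦ ±t_i` fix the image of `φ` while permuting the `L_ε` transitively. If `Q = A * B` with
`A`, `B` non-units, then `φ A`, `φ B` are non-units dividing `∏_ε L_ε`, so `L_ε ∣ φ A` and
`L_δ ∣ φ B` for some `ε`, `δ`. The sign change taking `L_ε` to `L_δ` then gives `L_δ ∣ φ A`,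
hence `L_δ² ∣ ∏_ε L_ε`, which is impossible.
-/

theorem Prime.mul_self_not_dvd_finset_prod {ι M : Type*} [CommMonoidWithZero M]
    [IsCancelMulZero M] [DecidableEq ι] {s : Finset ι} {f : ι → M} {i : ι} (hi : i ∈ s)
    (hp : Prime (f i)) (hne : ∀ j ∈ s, j ≠ i → ¬f i ∣ f j) : ¬f i * f i ∣ ∏ j ∈ s, f j := by
  rw [← Finset.mul_prod_erase s f hi]
  intro h
  obtain ⟨j, hj, hdvd⟩ := hp.exists_mem_finset_dvd ((mul_dvd_mul_iff_left hp.ne_zero).mp h)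
  exact hne j (Finset.mem_of_mem_erase hj) (Finset.ne_of_mem_erase hj) hdvd

theorem exists_dvd_of_dvd_finset_prod_of_irreducible {ι M : Type*} [CommMonoidWithZero M]
    [UniqueFactorizationMonoid M] {s : Finset ι} {f : ι → M} (hf : ∀ i ∈ s, Irreducible (f i))
    {a : M} (ha : ¬IsUnit a) (hdvd : a ∣ ∏ i ∈ s, f i) : ∃ i ∈ s, f i ∣ a := by
  have : Nontrivial M := nontrivial_of_ne a 1 (by rintro rfl; exact ha isUnit_one)
  have ha0 : a ≠ 0 := by
    rintro rfl
    obtain ⟨i, hi, hfi⟩ := Finset.prod_eq_zero_iff.mp (zero_dvd_iff.mp hdvd)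
    exact (hf i hi).ne_zero hfi
  obtain ⟨q, hq, hqa⟩ := WfDvdMonoid.exists_irreducible_factor ha ha0
  obtain ⟨i, hi, hqi⟩ := hq.prime.exists_mem_finset_dvd (hqa.trans hdvd)
  exact ⟨i, hi, (hq.dvd_symm (hf i hi) hqi).trans hqa⟩

namespace MvPolynomial

variable {σ R : Type*} [CommRing R]

theorem isUnit_expand_iff [IsReduced R] {p : ℕ} (hp : 0 < p) {f : MvPolynomial σ R} :
    IsUnit (expand p f) ↔ IsUnit f := by
  refine ⟨fun h => ?_, IsUnit.map _⟩
  obtain ⟨r, hr, hfr⟩ := isUnit_iff_eq_C_of_isReduced.mp h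
  rw [← expand_C p r] at hfr
  rw [expand_injective hp hfr]
  exact hr.map C

noncomputable def scaleVars (c : σ → R) : MvPolynomial σ R →ₐ[R] MvPolynomial σ R :=
  aeval fun i => C (c i) * X i

theorem scaleVars_X (c : σ → R) (i : σ) : scaleVars c (X i) = C (c i) * X i :=
  aeval_X _ i

theorem scaleVars_expand {p : ℕ} {c : σ → R} (hc : ∀ i, c i ^ p = 1) (f : MvPolynomial σ R) :
    scaleVars c (expand p f) = expand p f := by
  have h : (scaleVars c).comp (expand p) = expand p := algHom_ext fun i => by
    rw [AlgHom.comp_apply, expand_X, map_pow, scaleVars_X, mul_pow, ← C_pow, hc, C_1, one_mul]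
  exact DFunLike.congr_fun h f

end MvPolynomial

theorem signVal_mul_self (b : Bool) : signVal b * signVal b = 1 := by
  cases b <;> simp [signVal]

theorem sq_signVal_mul_signVal (a b : Bool) : (signVal a * signVal b) ^ 2 = 1 := by
  rw [mul_pow, sq, sq, signVal_mul_self, signVal_mul_self, one_mul]

theorem signVal_injective : Function.Injective signVal := by
  intro a b h
  cases a <;> cases b <;> first | rfl | norm_num [signVal] at h

section SignedLinearForm

variable {σ : Type*} [Fintype σ]

noncomputable def signedLinearForm (ε : σ → Bool) : MvPolynomial σ ℂ :=
  1 + ∑ i, C (signVal (ε i)) * X i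

theorem coeff_zero_signedLinearForm (ε : σ → Bool) : coeff 0 (signedLinearForm ε) = 1 := by
  simp [signedLinearForm, coeff_sum, coeff_C_mul]

theorem coeff_single_signedLinearForm (ε : σ → Bool) (j : σ) :
    coeff (Finsupp.single j 1) (signedLinearForm ε) = signVal (ε j) := by
  classical
  rw [signedLinearForm, coeff_add, coeff_sum, Finset.sum_eq_single j]
  · simp [coeff_C_mul, coeff_X, coeff_one, eq_comm, Finsupp.single_eq_zero]
  · intro i _ hij
    simp [coeff_C_mul, coeff_X, (Finsupp.single_left_injective one_ne_zero).ne hij]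
  · simp

theorem signedLinearForm_injective : Function.Injective (signedLinearForm (σ := σ)) :=
  fun ε δ h => funext fun j => signVal_injective <| by
    rw [← coeff_single_signedLinearForm ε j, ← coeff_single_signedLinearForm δ j, h]

theorem totalDegree_signedLinearForm [Nonempty σ] (ε : σ → Bool) :
    (signedLinearForm ε).totalDegree = 1 := by
  refine le_antisymm ?_ ?_
  · refine (totalDegree_add _ _).trans (max_le (by simp) (totalDegree_finsetSum_le fun i _ => ?_))
    exact (totalDegree_mul _ _).trans (by simp)
  · obtain ⟨j⟩ := ‹Nonempty σ›
    have hj : Finsupp.single j 1 ∈ (signedLinearForm ε).support := by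
      rw [mem_support_iff, coeff_single_signedLinearForm]
      cases ε j <;> norm_num [signVal]
    simpa using le_totalDegree hj

theorem irreducible_signedLinearForm [Nonempty σ] (ε : σ → Bool) :
    Irreducible (signedLinearForm ε) :=
  irreducible_of_totalDegree_eq_one (totalDegree_signedLinearForm ε) fun _ hx =>
    isUnit_of_dvd_one (coeff_zero_signedLinearForm ε ▸ hx 0)

theorem eq_of_signedLinearForm_dvd [Nonempty σ] {δ ε : σ → Bool}
    (h : signedLinearForm δ ∣ signedLinearForm ε) : δ = ε := by
  obtain ⟨c, hc⟩ := h
  have hcu : IsUnit c := ((irreducible_signedLinearForm ε).isUnit_or_isUnit hc).resolve_left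
    (irreducible_signedLinearForm δ).not_isUnit
  obtain ⟨u, -, rfl⟩ := isUnit_iff_eq_C_of_isReduced.mp hcu
  have hu : u = 1 := by
    simpa [mul_comm _ (C u), coeff_C_mul, coeff_zero_signedLinearForm] using
      (congrArg (coeff 0) hc).symm
  rw [hu, C_1, mul_one] at hc
  exact signedLinearForm_injective hc.symm

theorem scaleVars_signedLinearForm (ε δ : σ → Bool) :
    scaleVars (fun i => signVal (ε i) * signVal (δ i)) (signedLinearForm ε) =
      signedLinearForm δ := by
  simp only [signedLinearForm, map_add, map_one, map_sum, map_mul, scaleVars_X]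
  congr! 2 with i
  rw [algHom_C, algebraMap_eq]
  simp only [← map_mul, ← mul_assoc, signVal_mul_self, one_mul]

theorem signedLinearForm_dvd_expand_two {ε : σ → Bool} (δ : σ → Bool) {f : MvPolynomial σ ℂ}
    (h : signedLinearForm ε ∣ expand 2 f) : signedLinearForm δ ∣ expand 2 f := by
  simpa only [scaleVars_signedLinearForm, scaleVars_expand fun i => sq_signVal_mul_signVal _ _]
    using map_dvd (scaleVars fun i => signVal (ε i) * signVal (δ i)) h

variable [DecidableEq σ] [Nonempty σ]

theorem not_isUnit_prod_signedLinearForm : ¬IsUnit (∏ ε : σ → Bool, signedLinearForm ε) :=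
  fun h => (irreducible_signedLinearForm fun _ => true).not_isUnit <|
    isUnit_of_dvd_unit (Finset.dvd_prod_of_mem _ (Finset.mem_univ _)) h

theorem exists_signedLinearForm_dvd {f : MvPolynomial σ ℂ} (hf : f ∣ ∏ ε, signedLinearForm ε)
    (hu : ¬IsUnit f) : ∃ ε, signedLinearForm ε ∣ f := by
  obtain ⟨ε, -, hε⟩ := exists_dvd_of_dvd_finset_prod_of_irreducible
    (fun ε _ => irreducible_signedLinearForm ε) hu hf
  exact ⟨ε, hε⟩

theorem not_mul_self_dvd_prod_signedLinearForm (δ : σ → Bool) :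
    ¬signedLinearForm δ * signedLinearForm δ ∣ ∏ ε, signedLinearForm ε :=
  (irreducible_signedLinearForm δ).prime.mul_self_not_dvd_finset_prod (Finset.mem_univ δ)
    fun _ _ hne hdvd => hne (eq_of_signedLinearForm_dvd hdvd).symm

end SignedLinearForm

/-- any polynomial `Q ∈ ℂ[x_1, …, x_m]` with
`Q(t_1^2, …, t_m^2) = ∏_ε (1 + ε_1 t_1 + ⋯ + ε_m t_m)` is irreducible in
`ℂ[x_1, …, x_m]`; i.e. the expanded polynomial
`∏_ε (1 + ε_1 √x_1 + ⋯ + ε_m √x_m)` is irreducible. -/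
theorem lauricella_sing_polynomial_irreducible (m : ℕ) (hm : 1 ≤ m)
    (Q : MvPolynomial (Fin m) ℂ)
    (hQ : aeval (fun i : Fin m => (X i : MvPolynomial (Fin m) ℂ) ^ 2) Q =
      ∏ ε : Fin m → Bool, (1 + ∑ i, C (signVal (ε i)) * X i)) :
    Irreducible Q := by
  have : Nonempty (Fin m) := ⟨⟨0, hm⟩⟩
  have hP : expand 2 Q = ∏ ε, signedLinearForm ε := by
    rw [expand, ← aeval_eq_bind₁]
    exact hQ
  have hfactor (A : MvPolynomial (Fin m) ℂ) (hA : A ∣ Q) (hAu : ¬IsUnit A) :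
      ∃ ε, signedLinearForm ε ∣ expand 2 A :=
    exists_signedLinearForm_dvd (hP ▸ map_dvd (expand 2) hA)
      ((isUnit_expand_iff two_pos).not.mpr hAu)
  refine ⟨fun hQu => not_isUnit_prod_signedLinearForm (hP ▸ hQu.map (expand 2)), fun A B hAB => ?_⟩
  by_contra! h
  obtain ⟨ε, hε⟩ := hfactor A (hAB ▸ dvd_mul_right A B) h.1
  obtain ⟨δ, hδ⟩ := hfactor B (hAB ▸ dvd_mul_left B A) h.2
  refine not_mul_self_dvd_prod_signedLinearForm δ ?_
  rw [← hP, hAB, map_mul]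
  exact mul_dvd_mul (signedLinearForm_dvd_expand_two δ hε) hδ
end

section
/- Fix m ≥ 3 and parameters a, b, c_1, …, c_m ∈ ℂ. In the ℂ-algebra of ℂ-linear endomorphisms of ℂ[x_1, …, x_m], with θ_i = x_i∂_i, θ = ∑_k θ_k, S_i = θ_i(θ_i + c_i − 1), ℓ_i = S_i − x_i(θ + a)(θ + b), and ℓ_{ij} = x_jℓ_i − x_iℓ_j, the following identity holds for pairwise distinct indices i, j, k: x_k²∂_k² ∘ ℓ_{ij} − x_i²∂_i² ∘ ℓ_{kj} = S_j ∘ ℓ_{ik} − c_kθ_k ∘ ℓ_{ij} + c_iθ_i ∘ ℓ_{kj}. -/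
open MvPolynomial

noncomputable section

/-- Multiplication by the variable `x_i`, as a `ℂ`-linear endomorphism of
`ℂ[x_1, …, x_m]`. -/
def xmul (m : ℕ) (i : Fin m) : Module.End ℂ (MvPolynomial (Fin m) ℂ) :=
  LinearMap.mulLeft ℂ (X i)

/-- The `i`-th partial derivative `∂_i`, as a `ℂ`-linear endomorphism. -/
def dOp (m : ℕ) (i : Fin m) : Module.End ℂ (MvPolynomial (Fin m) ℂ) :=
  (pderiv i).toLinearMap

/-- The Euler operator `θ_i = x_i ∂_i`. -/
def thetaOp (m : ℕ) (i : Fin m) : Module.End ℂ (MvPolynomial (Fin m) ℂ) :=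
  xmul m i * dOp m i

/-- `θ = θ_1 + ⋯ + θ_m`. -/
def ThetaOp (m : ℕ) : Module.End ℂ (MvPolynomial (Fin m) ℂ) :=
  ∑ i, thetaOp m i

/-- A scalar `λ ∈ ℂ` acting as `λ · id`. -/
def cOp (m : ℕ) (z : ℂ) : Module.End ℂ (MvPolynomial (Fin m) ℂ) :=
  algebraMap ℂ (Module.End ℂ (MvPolynomial (Fin m) ℂ)) z

/-- `S_i = θ_i (θ_i + c_i − 1)`. -/
def sOp (m : ℕ) (c : Fin m → ℂ) (i : Fin m) :
    Module.End ℂ (MvPolynomial (Fin m) ℂ) :=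
  thetaOp m i * (thetaOp m i + cOp m (c i) - 1)

/-- The `i`-th Lauricella `F_C` operator
`ℓ_i = θ_i(θ_i + c_i − 1) − x_i (θ + a)(θ + b)`. -/
def ell (m : ℕ) (a b : ℂ) (c : Fin m → ℂ) (i : Fin m) :
    Module.End ℂ (MvPolynomial (Fin m) ℂ) :=
  sOp m c i - xmul m i * ((ThetaOp m + cOp m a) * (ThetaOp m + cOp m b))

/-- `ℓ_{ij} = x_j ℓ_i − x_i ℓ_j`. -/
def ellIJ (m : ℕ) (a b : ℂ) (c : Fin m → ℂ) (i j : Fin m) :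
    Module.End ℂ (MvPolynomial (Fin m) ℂ) :=
  xmul m j * ell m a b c i - xmul m i * ell m a b c j


lemma xmul_apply (m : ℕ) (i : Fin m) (p : MvPolynomial (Fin m) ℂ) :
    xmul m i p = X i * p := rfl

lemma xmul_monomial (m : ℕ) (i : Fin m) (s : Fin m →₀ ℕ) (r : ℂ) :
    xmul m i (monomial s r) = monomial (Finsupp.single i 1 + s) r := by
  rw [xmul_apply, X, monomial_mul, one_mul]

lemma dOp_monomial (m : ℕ) (i : Fin m) (s : Fin m →₀ ℕ) (r : ℂ) :
    dOp m i (monomial s r) = monomial (s - Finsupp.single i 1) (r * s i) := by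
  exact pderiv_monomial

lemma theta_monomial (m : ℕ) (i : Fin m) (s : Fin m →₀ ℕ) (r : ℂ) :
    thetaOp m i (monomial s r) = monomial s ((s i : ℂ) * r) := by
  rw [thetaOp, Module.End.mul_apply, dOp_monomial, xmul_monomial]
  rcases Nat.eq_zero_or_pos (s i) with h | h
  · simp [h]
  · have hle : Finsupp.single i 1 ≤ s := by
      rw [Finsupp.single_le_iff]; exact h
    rw [add_tsub_cancel_of_le hle, mul_comm]

lemma d_x_self (m : ℕ) (i : Fin m) :
    dOp m i * xmul m i = xmul m i * dOp m i + 1 := by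
  apply MvPolynomial.linearMap_ext; intro s; apply LinearMap.ext; intro r
  have h1 : xmul m i * dOp m i = thetaOp m i := rfl
  simp only [LinearMap.comp_apply, Module.End.mul_apply, LinearMap.add_apply,
    Module.End.one_apply, h1, xmul_monomial, dOp_monomial, theta_monomial,
    add_tsub_cancel_left, Finsupp.add_apply, Finsupp.single_eq_same]
  rw [← map_add]
  congr 1
  push_cast; ring

lemma commute_theta_xmul (m : ℕ) {p q : Fin m} (h : p ≠ q) :
    Commute (thetaOp m p) (xmul m q) := by
  apply MvPolynomial.linearMap_ext; intro s; apply LinearMap.ext; intro r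
  simp only [LinearMap.comp_apply, Module.End.mul_apply, xmul_monomial, theta_monomial,
    Finsupp.add_apply, Finsupp.single_apply]
  rw [if_neg (fun hh : q = p => h hh.symm), zero_add]

lemma commute_theta_theta (m : ℕ) (p q : Fin m) :
    Commute (thetaOp m p) (thetaOp m q) := by
  apply MvPolynomial.linearMap_ext; intro s; apply LinearMap.ext; intro r
  simp only [LinearMap.comp_apply, Module.End.mul_apply, theta_monomial]
  ring_nf

lemma commute_cOp_left (m : ℕ) (z : ℂ) (A : Module.End ℂ (MvPolynomial (Fin m) ℂ)) :
    Commute (cOp m z) A :=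
  Algebra.commute_algebraMap_left z A

lemma commute_xmul_xmul (m : ℕ) (p q : Fin m) :
    Commute (xmul m p) (xmul m q) := by
  apply MvPolynomial.linearMap_ext; intro s; apply LinearMap.ext; intro r
  simp only [LinearMap.comp_apply, Module.End.mul_apply, xmul_monomial]
  rw [add_left_comm]

lemma commute_sOp_xmul (m : ℕ) (c : Fin m → ℂ) {p q : Fin m} (h : p ≠ q) :
    Commute (sOp m c p) (xmul m q) :=
  (commute_theta_xmul m h).mul_left
    (((commute_theta_xmul m h).add_left ((commute_cOp_left m _ _))).sub_left
      (Commute.one_left _))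

lemma commute_sOp_sOp (m : ℕ) (c : Fin m → ℂ) (p q : Fin m) :
    Commute (sOp m c p) (sOp m c q) := by
  have h1 : Commute (sOp m c p) (thetaOp m q) :=
    (commute_theta_theta m p q).mul_left
      (((commute_theta_theta m p q).add_left
        (commute_cOp_left m _ _)).sub_left (Commute.one_left _))
  exact h1.mul_right ((h1.add_right (commute_cOp_left m _ _).symm).sub_right
    (Commute.one_right _))

lemma ellIJ_eq (m : ℕ) (a b : ℂ) (c : Fin m → ℂ) (i j : Fin m) :
    ellIJ m a b c i j = xmul m j * sOp m c i - xmul m i * sOp m c j := by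
  have hx := (commute_xmul_xmul m i j).eq
  simp only [ellIJ, ell, mul_sub, ← mul_assoc, hx]
  abel

lemma swap_sx (m : ℕ) (c : Fin m → ℂ) {p q : Fin m} (r : Fin m) (h : p ≠ q) :
    sOp m c p * (xmul m q * sOp m c r) = xmul m q * (sOp m c p * sOp m c r) := by
  rw [← mul_assoc, (commute_sOp_xmul m c h).eq, mul_assoc]

lemma core (m : ℕ) (a b : ℂ) (c : Fin m → ℂ) (i j k : Fin m)
    (hij : i ≠ j) (hik : i ≠ k) (hjk : j ≠ k) :
    sOp m c j * ellIJ m a b c i k =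
      sOp m c k * ellIJ m a b c i j - sOp m c i * ellIJ m a b c k j := by
  rw [ellIJ_eq, ellIJ_eq, ellIJ_eq]
  simp only [mul_sub]
  rw [swap_sx m c i hjk, swap_sx m c k hij.symm, swap_sx m c i hjk.symm,
    swap_sx m c j hik.symm, swap_sx m c k hij, swap_sx m c j hik]
  rw [(commute_sOp_sOp m c j i).eq, (commute_sOp_sOp m c k i).eq,
    (commute_sOp_sOp m c k j).eq, (commute_sOp_sOp m c j k).eq]
  abel

lemma x2d2 (m : ℕ) (c : Fin m → ℂ) (i : Fin m) :
    xmul m i ^ 2 * dOp m i ^ 2 = sOp m c i - cOp m (c i) * thetaOp m i := by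
  have hc : thetaOp m i * cOp m (c i) = cOp m (c i) * thetaOp m i :=
    (commute_cOp_left m _ _).symm.eq
  have h1 : thetaOp m i * thetaOp m i = xmul m i ^ 2 * dOp m i ^ 2 + thetaOp m i := by
    have h0 : thetaOp m i * thetaOp m i
        = xmul m i * ((dOp m i * xmul m i) * dOp m i) := by
      rw [thetaOp]; noncomm_ring
    rw [h0, d_x_self]
    rw [thetaOp]; noncomm_ring
  have h2 : sOp m c i - cOp m (c i) * thetaOp m i
      = thetaOp m i * thetaOp m i - thetaOp m i := by
    rw [sOp, mul_sub, mul_add, hc]; noncomm_ring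
  rw [h2]
  exact eq_sub_of_add_eq h1.symm


/-- the identity (dehomogenization of `sp(T_{ij}, T_{kj})`)
`x_k²∂_k² ℓ_{ij} − x_i²∂_i² ℓ_{kj}
  = S_j ℓ_{ik} − c_k θ_k ℓ_{ij} + c_i θ_i ℓ_{kj}`
for pairwise distinct `i, j, k`. -/
theorem lauricella_spair_tij_tkj (m : ℕ) (hm : 3 ≤ m) (a b : ℂ)
    (c : Fin m → ℂ) (i j k : Fin m)
    (hij : i ≠ j) (hik : i ≠ k) (hjk : j ≠ k) :
    xmul m k ^ 2 * dOp m k ^ 2 * ellIJ m a b c i j -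
      xmul m i ^ 2 * dOp m i ^ 2 * ellIJ m a b c k j =
    sOp m c j * ellIJ m a b c i k -
      cOp m (c k) * thetaOp m k * ellIJ m a b c i j +
      cOp m (c i) * thetaOp m i * ellIJ m a b c k j := by
  rw [x2d2 m c k, x2d2 m c i, core m a b c i j k hij hik hjk, sub_mul, sub_mul]
  abel

end
end

section
/- Fix m ≥ 4 and parameters a, b, c_1, …, c_m ∈ ℂ. In the ℂ-algebra of ℂ-linear endomorphisms of ℂ[x_1, …, x_m], with θ_i = x_i∂_i, θ = ∑_k θ_k, S_i = θ_i(θ_i + c_i − 1), ℓ_i = S_i − x_i(θ + a)(θ + b), and ℓ_{ij} = x_jℓ_i − x_iℓ_j, the following identity holds whenever {i, j} ∩ {i', j'} = ∅ (i ≠ j, i' ≠ j'): x_{i'}²x_{j'}∂_{i'}² ∘ ℓ_{ij} − x_i²x_j∂_i² ∘ ℓ_{i'j'} = x_{j'}S_j ∘ ℓ_{ii'} − x_{i'}S_i ∘ ℓ_{jj'} − c_{i'}x_{j'}θ_{i'} ∘ ℓ_{ij} + c_ix_jθ_i ∘ ℓ_{i'j'}. -/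
open MvPolynomial

noncomputable section

/-!
Since `x_k ∂_k x_k = x_k² ∂_k + x_k`, one has `x_k² ∂_k² = θ_k² − θ_k = S_k − c_k θ_k`, and the
hypergeometric parts `x_i x_j (θ + a)(θ + b)` cancel in `ℓ_{ij}`, so `ℓ_{ij} = x_j S_i − x_i S_j`.
The `c`-terms of the two sides then agree, and the remaining identity
`x_{j'} S_{i'} ℓ_{ij} − x_j S_i ℓ_{i'j'} = x_{j'} S_j ℓ_{ii'} − x_{i'} S_i ℓ_{jj'}` holds because both
sides expand to `x_j x_{i'} S_i S_{j'} − x_i x_{j'} S_j S_{i'}`: the `S_k` commute with each other and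
`S_k` commutes with `x_l` for `l ≠ k`.
-/

theorem MvPolynomial.pderiv_pderiv_comm {σ R : Type*} [CommSemiring R] (i j : σ)
    (p : MvPolynomial σ R) : pderiv i (pderiv j p) = pderiv j (pderiv i p) := by
  classical
  induction p using MvPolynomial.induction_on' with
  | add p q hp hq => simp only [map_add, hp, hq]
  | monomial s a =>
    rcases eq_or_ne i j with rfl | h
    · rfl
    simp only [pderiv_monomial]
    rw [tsub_right_comm]
    congr 1
    simp [h, h.symm]
    ring

section WeylRelations

variable {m : ℕ}

theorem cOp_commute (z : ℂ) (T : Module.End ℂ (MvPolynomial (Fin m) ℂ)) :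
    Commute (cOp m z) T :=
  Algebra.commute_algebraMap_left z T

theorem xmul_commute (k l : Fin m) : Commute (xmul m k) (xmul m l) := by
  ext p
  simp [xmul, mul_left_comm]

theorem dOp_commute (k l : Fin m) : Commute (dOp m k) (dOp m l) :=
  LinearMap.ext (pderiv_pderiv_comm k l)

theorem dOp_commute_xmul {k l : Fin m} (h : k ≠ l) : Commute (dOp m k) (xmul m l) := by
  ext p
  simp [dOp, xmul, pderiv_X_of_ne h.symm]

theorem dOp_mul_xmul_self (k : Fin m) : dOp m k * xmul m k = xmul m k * dOp m k + 1 := by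
  ext p
  simp [dOp, xmul, add_comm]

theorem thetaOp_commute_xmul {k l : Fin m} (h : k ≠ l) : Commute (thetaOp m k) (xmul m l) :=
  (xmul_commute k l).mul_left (dOp_commute_xmul h)

theorem thetaOp_commute_dOp {k l : Fin m} (h : k ≠ l) : Commute (thetaOp m k) (dOp m l) :=
  (dOp_commute_xmul h.symm).symm.mul_left (dOp_commute k l)

theorem thetaOp_commute (k l : Fin m) : Commute (thetaOp m k) (thetaOp m l) := by
  rcases eq_or_ne k l with rfl | h
  · exact Commute.refl _
  · exact (thetaOp_commute_xmul h).mul_right (thetaOp_commute_dOp h)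

theorem sOp_commute_of_thetaOp_commute (c : Fin m → ℂ) {k : Fin m}
    {T : Module.End ℂ (MvPolynomial (Fin m) ℂ)} (h : Commute (thetaOp m k) T) :
    Commute (sOp m c k) T :=
  h.mul_left ((h.add_left (cOp_commute _ _)).sub_left (Commute.one_left _))

theorem sOp_commute_xmul (c : Fin m → ℂ) {k l : Fin m} (h : k ≠ l) :
    Commute (sOp m c k) (xmul m l) :=
  sOp_commute_of_thetaOp_commute c (thetaOp_commute_xmul h)

theorem sOp_commute (c : Fin m → ℂ) (k l : Fin m) : Commute (sOp m c k) (sOp m c l) :=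
  sOp_commute_of_thetaOp_commute c
    (sOp_commute_of_thetaOp_commute c (thetaOp_commute k l).symm).symm

theorem xmul_sq_mul_dOp_sq (c : Fin m → ℂ) (k : Fin m) :
    xmul m k ^ 2 * dOp m k ^ 2 = sOp m c k - cOp m (c k) * thetaOp m k := by
  have hθθ : thetaOp m k * thetaOp m k = xmul m k ^ 2 * dOp m k ^ 2 + thetaOp m k :=
    calc xmul m k * dOp m k * (xmul m k * dOp m k)
        = xmul m k * (dOp m k * xmul m k) * dOp m k := by noncomm_ring
      _ = xmul m k ^ 2 * dOp m k ^ 2 + thetaOp m k := by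
        rw [dOp_mul_xmul_self, thetaOp]; noncomm_ring
  rw [sOp, mul_sub, mul_add, hθθ, ← (cOp_commute (c k) (thetaOp m k)).eq]
  noncomm_ring

end WeylRelations

section Lauricella

variable {m : ℕ} (a b : ℂ) (c : Fin m → ℂ)

theorem ellIJ_eq_sub (i j : Fin m) :
    ellIJ m a b c i j = xmul m j * sOp m c i - xmul m i * sOp m c j := by
  rw [ellIJ, ell, ell, mul_sub, mul_sub]
  simp only [← mul_assoc]
  rw [(xmul_commute j i).eq]
  abel

theorem xmul_sOp_ellIJ_exchange {i j i' j' : Fin m} (hij : i ≠ j) (hii' : i ≠ i')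
    (hij' : i ≠ j') (hji' : j ≠ i') :
    xmul m j' * sOp m c i' * ellIJ m a b c i j - xmul m j * sOp m c i * ellIJ m a b c i' j' =
      xmul m j' * sOp m c j * ellIJ m a b c i i' -
        xmul m i' * sOp m c i * ellIJ m a b c j j' := by
  simp only [ellIJ_eq_sub, mul_sub]
  simp only [(sOp_commute_xmul c hji'.symm).mul_mul_mul_comm,
    (sOp_commute_xmul c hii'.symm).mul_mul_mul_comm, (sOp_commute_xmul c hij').mul_mul_mul_comm,
    (sOp_commute_xmul c hii').mul_mul_mul_comm, (sOp_commute_xmul c hji').mul_mul_mul_comm,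
    (sOp_commute_xmul c hij.symm).mul_mul_mul_comm, (sOp_commute_xmul c hij).mul_mul_mul_comm]
  rw [(xmul_commute j j').eq, (xmul_commute i' j').eq, (xmul_commute i' j).eq,
    (sOp_commute c i i').eq, (sOp_commute c i j).eq, (sOp_commute c j i').eq]
  abel

end Lauricella

theorem lauricella_spair_tij_tij'_general (m : ℕ) (a b : ℂ)
    (c : Fin m → ℂ) (i j i' j' : Fin m)
    (hij : i ≠ j)
    (hdisj : ({i, j} : Set (Fin m)) ∩ {i', j'} = ∅) :
    xmul m i' ^ 2 * xmul m j' * dOp m i' ^ 2 * ellIJ m a b c i j -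
      xmul m i ^ 2 * xmul m j * dOp m i ^ 2 * ellIJ m a b c i' j' =
    xmul m j' * sOp m c j * ellIJ m a b c i i' -
      xmul m i' * sOp m c i * ellIJ m a b c j j' -
      cOp m (c i') * xmul m j' * thetaOp m i' * ellIJ m a b c i j +
      cOp m (c i) * xmul m j * thetaOp m i * ellIJ m a b c i' j' := by
  simp only [← Set.disjoint_iff_inter_eq_empty, Set.disjoint_insert_left,
    Set.disjoint_insert_right, Set.disjoint_singleton, Set.mem_insert_iff,
    Set.mem_singleton_iff, not_or] at hdisj
  obtain ⟨⟨hi'i, hi'j⟩, hij', -⟩ := hdisj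
  have hx (k l : Fin m) : xmul m k ^ 2 * xmul m l * dOp m k ^ 2 =
      xmul m l * (sOp m c k - cOp m (c k) * thetaOp m k) := by
    rw [((xmul_commute l k).pow_right 2).eq.symm, mul_assoc, xmul_sq_mul_dOp_sq]
  rw [hx, hx, (cOp_commute _ (xmul m j')).eq, (cOp_commute _ (xmul m j)).eq,
    ← xmul_sOp_ellIJ_exchange a b c hij (Ne.symm hi'i) hij' (Ne.symm hi'j)]
  simp only [mul_sub, sub_mul, mul_assoc]
  abel

/-- the identity (dehomogenization of `sp(T_{ij}, T_{i'j'})`)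
`x_{i'}²x_{j'}∂_{i'}² ℓ_{ij} − x_i²x_j∂_i² ℓ_{i'j'}
  = x_{j'} S_j ℓ_{ii'} − x_{i'} S_i ℓ_{jj'} − c_{i'} x_{j'} θ_{i'} ℓ_{ij}
    + c_i x_j θ_i ℓ_{i'j'}` for `{i,j} ∩ {i',j'} = ∅`, `i ≠ j`, `i' ≠ j'`. -/
theorem lauricella_spair_tij_tij' (m : ℕ) (hm : 4 ≤ m) (a b : ℂ)
    (c : Fin m → ℂ) (i j i' j' : Fin m)
    (hij : i ≠ j) (hij' : i' ≠ j')
    (hdisj : ({i, j} : Set (Fin m)) ∩ {i', j'} = ∅) :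
    xmul m i' ^ 2 * xmul m j' * dOp m i' ^ 2 * ellIJ m a b c i j -
      xmul m i ^ 2 * xmul m j * dOp m i ^ 2 * ellIJ m a b c i' j' =
    xmul m j' * sOp m c j * ellIJ m a b c i i' -
      xmul m i' * sOp m c i * ellIJ m a b c j j' -
      cOp m (c i') * xmul m j' * thetaOp m i' * ellIJ m a b c i j +
      cOp m (c i) * xmul m j * thetaOp m i * ellIJ m a b c i' j' :=
  lauricella_spair_tij_tij'_general m a b c i j i' j' hij hdisj

end
end
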